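/- Let λ > 0, μ ∈ ℝ, u ∈ ℓ²(ℤ, ℂ), and let ξ_l be a cut-off sequence with values in [0,1] satisfying ‖D⁺ξ_l‖_∞ ≤ c₂/l. Then Re[(λ + iμ)(D⁺u, D⁺(ξ_l u))] ≤ 4λ Σ_{j∈ℤ} ξ_{l,j} |u_j|² + (4λ + 2|μ|)(c₂/l) ‖u‖², where (ξ_l u)_j = ξ_{l,j} u_j and the inner product is the ℓ² complex inner product. -/

import Mathlib

/-!
Split `D⁺(ξu)_j = a x - b y` (with `x = u_{j+1}`, `y = u_j`, `a = ξ_{j+1}`, `b = ξ_j`) as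
`(a + b)/2 (x - y) + (a - b)/2 (x + y)`. The first part pairs with `D⁺u_j = x - y` to the
nonnegative real `(a + b)/2 |x - y|²`, so `λ + iμ` acts on it through `λ` alone, and
`|x - y|² ≤ 2(|x|² + |y|²)` together with `|a - b| ≤ c₂/l` bounds it by `2λ(a|x|² + b|y|²)` up to
an `O(c₂/l)` error. The second part is `O(c₂/l)` by the parallelogram law. Each term of the
series is thus bounded by `F(j+1) + F(j)` with `F(j) = 2λ ξ_j |u_j|² + O(c₂/l) |u_j|²`, and
summing over `ℤ` counts every `F(j)` twice.
-/

open ComplexConjugate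

lemma norm_sub_mul_norm_add_le {E : Type*} [NormedAddCommGroup E] [InnerProductSpace ℝ E]
    (x y : E) : ‖x - y‖ * ‖x + y‖ ≤ ‖x‖ ^ 2 + ‖y‖ ^ 2 := by
  nlinarith [parallelogram_law_with_norm ℝ x y, sq_nonneg (‖x - y‖ - ‖x + y‖)]

lemma norm_sub_sq_le {E : Type*} [SeminormedAddCommGroup E] (x y : E) :
    ‖x - y‖ ^ 2 ≤ 2 * (‖x‖ ^ 2 + ‖y‖ ^ 2) := by
  nlinarith [norm_sub_le x y, norm_nonneg (x - y), sq_nonneg (‖x‖ - ‖y‖)]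

lemma re_mul_sub_mul_conj_le (z x y : ℂ) (hz : 0 ≤ z.re) {a b ε : ℝ} (ha : 0 ≤ a) (hb : 0 ≤ b)
    (hab : |a - b| ≤ ε) :
    (z * ((x - y) * conj (a * x - b * y))).re ≤
      (2 * z.re * (a * ‖x‖ ^ 2) + (z.re + ‖z‖ / 2) * ε * ‖x‖ ^ 2) +
        (2 * z.re * (b * ‖y‖ ^ 2) + (z.re + ‖z‖ / 2) * ε * ‖y‖ ^ 2) := by
  have hsplit : (x - y) * conj (a * x - b * y) =
      (((a + b) / 2 * ‖x - y‖ ^ 2 : ℝ) : ℂ) + ((a - b) / 2 : ℝ) * ((x - y) * conj (x + y)) := by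
    have h := Complex.mul_conj' (x - y)
    push_cast
    rw [← h]
    simp only [map_sub, map_add, map_mul, Complex.conj_ofReal]
    ring
  have hsym : (z * (((a - b) / 2 : ℝ) * ((x - y) * conj (x + y)))).re ≤
      ‖z‖ * (ε / 2) * (‖x‖ ^ 2 + ‖y‖ ^ 2) := by
    calc _ ≤ ‖z * (((a - b) / 2 : ℝ) * ((x - y) * conj (x + y)))‖ := Complex.re_le_norm _
      _ = ‖z‖ * (|a - b| / 2) * (‖x - y‖ * ‖x + y‖) := by
        simp only [norm_mul, Complex.norm_real, Real.norm_eq_abs, abs_div, RCLike.norm_conj]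
        norm_num
        ring
      _ ≤ ‖z‖ * (ε / 2) * (‖x‖ ^ 2 + ‖y‖ ^ 2) := by
        have hε : 0 ≤ ε := (abs_nonneg _).trans hab
        exact mul_le_mul (by gcongr) (norm_sub_mul_norm_add_le x y) (by positivity) (by positivity)
  have hdiag : z.re * ((a + b) / 2 * ‖x - y‖ ^ 2) ≤ z.re * ((a + b) * (‖x‖ ^ 2 + ‖y‖ ^ 2)) := by
    refine mul_le_mul_of_nonneg_left ?_ hz
    nlinarith [norm_sub_sq_le x y]
  have hcross : z.re * (b * ‖x‖ ^ 2 + a * ‖y‖ ^ 2) ≤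
      z.re * ((a + ε) * ‖x‖ ^ 2 + (b + ε) * ‖y‖ ^ 2) := by
    have := abs_le.mp hab
    gcongr <;> linarith
  rw [hsplit, mul_add, Complex.add_re, Complex.re_mul_ofReal]
  nlinarith

lemma norm_sub_mul_conj_le (x y : ℂ) {a b : ℝ} (ha : |a| ≤ 1) (hb : |b| ≤ 1) :
    ‖(x - y) * conj (a * x - b * y)‖ ≤ 2 * (‖x‖ ^ 2 + ‖y‖ ^ 2) := by
  have hxy : ‖(a : ℂ) * x - b * y‖ ≤ ‖x‖ + ‖y‖ := by
    calc _ ≤ |a| * ‖x‖ + |b| * ‖y‖ := by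
          simpa only [norm_mul, Complex.norm_real, Real.norm_eq_abs] using
            norm_sub_le ((a : ℂ) * x) ((b : ℂ) * y)
      _ ≤ ‖x‖ + ‖y‖ := by gcongr <;> nlinarith [norm_nonneg x, norm_nonneg y]
  rw [norm_mul, RCLike.norm_conj]
  nlinarith [norm_sub_le x y, norm_nonneg (x - y), sq_nonneg (‖x‖ - ‖y‖)]

section IntShift

variable {α : Type*} [AddCommMonoid α] [TopologicalSpace α]

lemma Summable.comp_int_add_one {f : ℤ → α} (hf : Summable f) : Summable fun j => f (j + 1) :=
  (Equiv.addRight (1 : ℤ)).summable_iff.mpr hf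

lemma tsum_comp_int_add_one (f : ℤ → α) : ∑' j, f (j + 1) = ∑' j, f j :=
  (Equiv.addRight (1 : ℤ)).tsum_eq f

end IntShift

lemma re_mul_tsum_le_two_mul_tsum (z : ℂ) {T : ℤ → ℂ} (hT : Summable T) {F : ℤ → ℝ}
    (hF : Summable F) (hle : ∀ j, (z * T j).re ≤ F (j + 1) + F j) :
    (z * ∑' j, T j).re ≤ 2 * ∑' j, F j := by
  rw [← tsum_mul_left, Complex.re_tsum (hT.mul_left z)]
  calc ∑' j, (z * T j).re ≤ ∑' j, (F (j + 1) + F j) :=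
        (hT.mul_left z).mapL Complex.reCLM |>.tsum_le_tsum hle (hF.comp_int_add_one.add hF)
    _ = 2 * ∑' j, F j := by
        rw [hF.comp_int_add_one.tsum_add hF, tsum_comp_int_add_one]
        ring

lemma summable_sub_mul_conj_sub {u : ℤ → ℂ} (hu : Summable fun j => ‖u j‖ ^ 2) {ξ : ℤ → ℝ}
    (hξ : ∀ j, |ξ j| ≤ 1) :
    Summable fun j => (u (j + 1) - u j) * conj ((ξ (j + 1) : ℂ) * u (j + 1) - ξ j * u j) :=
  .of_norm_bounded ((hu.comp_int_add_one.add hu).mul_left 2)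
    fun _ => norm_sub_mul_conj_le _ _ (hξ _) (hξ _)

lemma summable_mul_norm_sq_of_mem_Icc {u : ℤ → ℂ} (hu : Summable fun j => ‖u j‖ ^ 2) {ξ : ℤ → ℝ}
    (hξ : ∀ j, ξ j ∈ Set.Icc (0 : ℝ) 1) : Summable fun j => ξ j * ‖u j‖ ^ 2 :=
  .of_nonneg_of_le (fun j => mul_nonneg (hξ j).1 (sq_nonneg _))
    (fun j => mul_le_of_le_one_left (sq_nonneg _) (hξ j).2) hu

theorem stmt14_general (lam μ c₂ : ℝ) (hlam : 0 < lam) (l : ℕ)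
    (ξ : ℤ → ℝ) (hrange : ∀ j : ℤ, ξ j ∈ Set.Icc (0 : ℝ) 1)
    (hdiff : ∀ j : ℤ, |ξ (j + 1) - ξ j| ≤ c₂ / (l : ℝ))
    (u : lp (fun _ : ℤ => ℂ) 2) :
    (((lam : ℂ) + μ * Complex.I) *
        ∑' j : ℤ, (u (j + 1) - u j) *
          (starRingEnd ℂ) ((ξ (j + 1) : ℂ) * u (j + 1) - (ξ j : ℂ) * u j)).re ≤
      4 * lam * ∑' j : ℤ, ξ j * ‖u j‖ ^ 2
      + (4 * lam + 2 * |μ|) * (c₂ / (l : ℝ)) * ‖u‖ ^ 2 := by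
  set z : ℂ := lam + μ * Complex.I
  set ε := c₂ / (l : ℝ)
  have hz_re : z.re = lam := by simp [z]
  have hz_norm : ‖z‖ ≤ lam + |μ| := by
    simpa [z, abs_of_pos hlam] using norm_add_le (lam : ℂ) (μ * Complex.I)
  have hε : 0 ≤ ε := (abs_nonneg _).trans (hdiff 0)
  have hu : Summable fun j => ‖u j‖ ^ 2 := by
    simpa using (lp.memℓp u).summable (by norm_num : (0 : ℝ) < (2 : ENNReal).toReal)
  have hnorm : ‖u‖ ^ 2 = ∑' j, ‖u j‖ ^ 2 := by
    simpa using lp.norm_rpow_eq_tsum (by norm_num : (0 : ℝ) < (2 : ENNReal).toReal) u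
  have hξu := summable_mul_norm_sq_of_mem_Icc hu hrange
  have hbound := re_mul_tsum_le_two_mul_tsum z
    (summable_sub_mul_conj_sub hu fun j => (abs_of_nonneg (hrange j).1).trans_le (hrange j).2)
    ((hξu.mul_left (2 * z.re)).add (hu.mul_left ((z.re + ‖z‖ / 2) * ε)))
    fun j => re_mul_sub_mul_conj_le z _ _ (hz_re ▸ hlam.le)
      (hrange _).1 (hrange _).1 (hdiff j)
  rw [(hξu.mul_left _).tsum_add (hu.mul_left _), tsum_mul_left, tsum_mul_left, hz_re] at hbound
  rw [hnorm]
  have hgap : 0 ≤ (2 * lam + 2 * |μ| - ‖z‖) * ε * ∑' j, ‖u j‖ ^ 2 :=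
    mul_nonneg (mul_nonneg (by linarith [abs_nonneg μ]) hε) (tsum_nonneg fun _ => sq_nonneg _)
  linarith

/-- Cut-off weighted gradient estimate: for `λ > 0`, `μ ∈ ℝ`, `u ∈ ℓ²(ℤ, ℂ)` and a cut-off
sequence `ξ_l` with values in `[0,1]` and `‖D⁺ξ_l‖_∞ ≤ c₂/l`,
`Re[(λ + iμ)(D⁺u, D⁺(ξ_l u))] ≤ 4λ Σ_j ξ_{l,j} |u_j|² + (4λ + 2|μ|)(c₂/l) ‖u‖²`,
where `(x, y) = Σ_j x_j conj(y_j)` is the `ℓ²` inner product. -/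
theorem stmt14 (lam μ c₂ : ℝ) (hlam : 0 < lam) (l : ℕ) (hl : 0 < l)
    (ξ : ℤ → ℝ) (hrange : ∀ j : ℤ, ξ j ∈ Set.Icc (0 : ℝ) 1)
    (hdiff : ∀ j : ℤ, |ξ (j + 1) - ξ j| ≤ c₂ / (l : ℝ))
    (u : lp (fun _ : ℤ => ℂ) 2) :
    (((lam : ℂ) + μ * Complex.I) *
        ∑' j : ℤ, (u (j + 1) - u j) *
          (starRingEnd ℂ) ((ξ (j + 1) : ℂ) * u (j + 1) - (ξ j : ℂ) * u j)).re ≤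
      4 * lam * ∑' j : ℤ, ξ j * ‖u j‖ ^ 2
      + (4 * lam + 2 * |μ|) * (c₂ / (l : ℝ)) * ‖u‖ ^ 2 :=
  stmt14_general lam μ c₂ hlam l ξ hrange hdiff u
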